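/- Under the block hypotheses above (‖E_{ij}‖_F ≤ √(nᵢnⱼ) √(h(Δ)) for i ≠ j, E_{ii} = 0, E symmetric), the spectral norm satisfies ‖E‖₂ ≤ √(h(Δ)) · maxᵢ Σ_{j≠i} √(nᵢnⱼ) ≤ √(h(Δ)) · (N + (C−2) n_max)/2, and in the balanced case nᵢ = N/C the bound becomes ‖E‖₂ ≤ N(1 − 1/C) √(h(Δ)). -/
import Mathlib


open scoped BigOperators

/-- Squared Frobenius norm of a real (possibly rectangular) matrix. -/
noncomputable def frobSq {ι κ : Type*} [Fintype ι] [Fintype κ] (M : Matrix ι κ ℝ) : ℝ :=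
  ∑ x, ∑ y, (M x y) ^ 2

/-- Operator norm (induced by Euclidean norms) of a real matrix. -/
noncomputable def opNorm {ι κ : Type*} [Fintype ι] [Fintype κ] [DecidableEq κ]
    (M : Matrix ι κ ℝ) : ℝ :=
  ‖LinearMap.toContinuousLinearMap (Matrix.toEuclideanLin M)‖

/-- Cauchy–Schwarz for finite sums with absolute value. -/
lemma abs_sum_mul_le_sqrt {ι : Type*} (s : Finset ι) (f g : ι → ℝ) :
    |∑ i ∈ s, f i * g i| ≤ Real.sqrt (∑ i ∈ s, f i ^ 2) * Real.sqrt (∑ i ∈ s, g i ^ 2) := by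
  rw [← Real.sqrt_mul (Finset.sum_nonneg fun i _ => sq_nonneg _)]
  exact Real.abs_le_sqrt (Finset.sum_mul_sq_le_sq_mul_sq s f g)

/-- Bilinear form of a block bounded by Frobenius norm times vector norms. -/
lemma abs_bilin_le_frob {a b : Type*} [Fintype a] [Fintype b]
    (A : Matrix a b ℝ) (x : a → ℝ) (y : b → ℝ) :
    |∑ p, ∑ q, x p * A p q * y q| ≤
      Real.sqrt (frobSq A) * (Real.sqrt (∑ p, x p ^ 2) * Real.sqrt (∑ q, y q ^ 2)) := by
  have h1 : ∑ p, ∑ q, x p * A p q * y q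
      = ∑ pq ∈ Finset.univ ×ˢ Finset.univ, A pq.1 pq.2 * (x pq.1 * y pq.2) := by
    rw [Finset.sum_product]
    exact Finset.sum_congr rfl fun p _ => Finset.sum_congr rfl fun q _ => by ring
  have h2 := abs_sum_mul_le_sqrt (Finset.univ ×ˢ Finset.univ)
    (fun pq : a × b => A pq.1 pq.2) (fun pq : a × b => x pq.1 * y pq.2)
  rw [h1]
  refine h2.trans_eq ?_
  have e1 : ∑ pq ∈ Finset.univ ×ˢ Finset.univ, (A pq.1 pq.2) ^ 2 = frobSq A := by
    rw [frobSq, Finset.sum_product]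
  have e2 : ∑ pq ∈ Finset.univ ×ˢ Finset.univ, (x pq.1 * y pq.2) ^ 2
      = (∑ p, x p ^ 2) * (∑ q, y q ^ 2) := by
    rw [Finset.sum_product, Finset.sum_mul_sum]
    exact Finset.sum_congr rfl fun p _ => Finset.sum_congr rfl fun q _ => by ring
  rw [e1, e2, Real.sqrt_mul (Finset.sum_nonneg fun i _ => sq_nonneg _)]

/-- Key quadratic-form bound for the block matrix. -/
lemma quad_bound
    {C : ℕ} {n : Fin C → ℕ}
    (E : Matrix ((i : Fin C) × Fin (n i)) ((i : Fin C) × Fin (n i)) ℝ)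
    (hdiag : ∀ (i : Fin C) (x y : Fin (n i)), E ⟨i, x⟩ ⟨i, y⟩ = 0)
    (hΔ : ℝ) (hΔpos : 0 ≤ hΔ)
    (hblock : ∀ i j, i ≠ j →
      Real.sqrt (frobSq (fun (x : Fin (n i)) (y : Fin (n j)) => E ⟨i, x⟩ ⟨j, y⟩))
        ≤ Real.sqrt ((n i : ℝ) * (n j : ℝ)) * Real.sqrt hΔ)
    (S : ℝ) (hSnn : 0 ≤ S)
    (hS : ∀ i, ∑ j ∈ Finset.univ.erase i, Real.sqrt ((n i : ℝ) * (n j : ℝ)) ≤ S)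
    (x y : ((i : Fin C) × Fin (n i)) → ℝ) :
    |∑ k, ∑ l, x k * E k l * y l| ≤ Real.sqrt hΔ * S *
      (Real.sqrt (∑ k, x k ^ 2) * Real.sqrt (∑ k, y k ^ 2)) := by
  classical
  set D : ℝ := Real.sqrt hΔ * S with hD
  have hDnn : 0 ≤ D := mul_nonneg (Real.sqrt_nonneg _) hSnn
  set W : Fin C → Fin C → ℝ := fun i j =>
    if i = j then 0 else Real.sqrt ((n i : ℝ) * (n j : ℝ)) * Real.sqrt hΔ with hWdef
  have hW0 : ∀ i j, 0 ≤ W i j := by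
    intro i j; simp only [hWdef]
    split <;> positivity
  have hWrow : ∀ i, ∑ j, W i j ≤ D := by
    intro i
    have : ∑ j, W i j =
        (∑ j ∈ Finset.univ.erase i, Real.sqrt ((n i : ℝ) * (n j : ℝ))) * Real.sqrt hΔ := by
      rw [Finset.sum_mul, ← Finset.sum_erase (Finset.univ) (f := fun j => W i j) (a := i)
        (show W i i = 0 by simp [hWdef])]
      refine Finset.sum_congr rfl fun j hj => ?_
      have hji : j ≠ i := Finset.ne_of_mem_erase hj
      simp [hWdef, hji.symm]
    rw [this, hD, mul_comm (Real.sqrt hΔ) S]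
    exact mul_le_mul_of_nonneg_right (hS i) (Real.sqrt_nonneg _)
  have hWcol : ∀ j, ∑ i, W i j ≤ D := by
    intro j
    have : ∑ i, W i j = ∑ i, W j i := by
      refine Finset.sum_congr rfl fun i _ => ?_
      simp only [hWdef]
      by_cases h : i = j
      · simp [h]
      · simp [h, Ne.symm h, mul_comm ((n i : ℝ)) ((n j : ℝ))]
    rw [this]; exact hWrow j
  set ξ : Fin C → ℝ := fun i => Real.sqrt (∑ p, x ⟨i, p⟩ ^ 2) with hξdef
  set η : Fin C → ℝ := fun j => Real.sqrt (∑ q, y ⟨j, q⟩ ^ 2) with hηdef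
  have hB : ∀ i j, |∑ p, ∑ q, x ⟨i, p⟩ * E ⟨i, p⟩ ⟨j, q⟩ * y ⟨j, q⟩| ≤ W i j * (ξ i * η j) := by
    intro i j
    by_cases h : i = j
    · subst h
      simp [hdiag, hWdef]
    · refine (abs_bilin_le_frob (fun p q => E ⟨i, p⟩ ⟨j, q⟩) (fun p => x ⟨i, p⟩)
        (fun q => y ⟨j, q⟩)).trans ?_
      have hWij : W i j = Real.sqrt ((n i : ℝ) * (n j : ℝ)) * Real.sqrt hΔ := by
        simp [hWdef, h]
      rw [hWij]
      exact mul_le_mul_of_nonneg_right (hblock i j h)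
        (mul_nonneg (Real.sqrt_nonneg _) (Real.sqrt_nonneg _))
  have hsplit : ∑ k, ∑ l, x k * E k l * y l
      = ∑ i, ∑ j, ∑ p, ∑ q, x ⟨i, p⟩ * E ⟨i, p⟩ ⟨j, q⟩ * y ⟨j, q⟩ := by
    calc ∑ k, ∑ l, x k * E k l * y l
        = ∑ i, ∑ p, ∑ l, x ⟨i, p⟩ * E ⟨i, p⟩ l * y l := Finset.sum_sigma _ _ _
      _ = ∑ i, ∑ p, ∑ j, ∑ q, x ⟨i, p⟩ * E ⟨i, p⟩ ⟨j, q⟩ * y ⟨j, q⟩ :=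
          Finset.sum_congr rfl fun i _ => Finset.sum_congr rfl fun p _ => Finset.sum_sigma _ _ _
      _ = ∑ i, ∑ j, ∑ p, ∑ q, x ⟨i, p⟩ * E ⟨i, p⟩ ⟨j, q⟩ * y ⟨j, q⟩ :=
          Finset.sum_congr rfl fun i _ => Finset.sum_comm
  have step1 : |∑ k, ∑ l, x k * E k l * y l| ≤ ∑ i, ∑ j, W i j * (ξ i * η j) := by
    rw [hsplit]
    refine (Finset.abs_sum_le_sum_abs _ _).trans ?_
    refine Finset.sum_le_sum fun i _ => ?_
    exact (Finset.abs_sum_le_sum_abs _ _).trans (Finset.sum_le_sum fun j _ => hB i j)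
  -- Cauchy–Schwarz over pairs
  set f : Fin C × Fin C → ℝ := fun pq => Real.sqrt (W pq.1 pq.2) * ξ pq.1 with hfdef
  set g : Fin C × Fin C → ℝ := fun pq => Real.sqrt (W pq.1 pq.2) * η pq.2 with hgdef
  have step2 : ∑ i, ∑ j, W i j * (ξ i * η j)
      = ∑ pq ∈ Finset.univ ×ˢ Finset.univ, f pq * g pq := by
    rw [Finset.sum_product]
    refine Finset.sum_congr rfl fun i _ => Finset.sum_congr rfl fun j _ => ?_
    simp only [hfdef, hgdef]
    rw [show Real.sqrt (W i j) * ξ i * (Real.sqrt (W i j) * η j)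
        = Real.sqrt (W i j) * Real.sqrt (W i j) * (ξ i * η j) by ring,
      Real.mul_self_sqrt (hW0 i j)]
  have hf2 : ∑ pq ∈ Finset.univ ×ˢ Finset.univ, f pq ^ 2 ≤ D * ∑ k, x k ^ 2 := by
    have : ∑ pq ∈ Finset.univ ×ˢ Finset.univ, f pq ^ 2 = ∑ i, (∑ j, W i j) * ξ i ^ 2 := by
      rw [Finset.sum_product]
      refine Finset.sum_congr rfl fun i _ => ?_
      rw [Finset.sum_mul]
      refine Finset.sum_congr rfl fun j _ => ?_
      simp only [hfdef]
      rw [mul_pow, Real.sq_sqrt (hW0 i j)]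
    rw [this]
    have hxsum : ∑ k, x k ^ 2 = ∑ i, ξ i ^ 2 := by
      rw [show (∑ k, x k ^ 2 : ℝ) = ∑ i, ∑ p, x ⟨i, p⟩ ^ 2 from Finset.sum_sigma _ _ _]
      exact Finset.sum_congr rfl fun i _ =>
        (Real.sq_sqrt (Finset.sum_nonneg fun p _ => sq_nonneg _)).symm
    rw [hxsum, Finset.mul_sum]
    exact Finset.sum_le_sum fun i _ =>
      mul_le_mul_of_nonneg_right (hWrow i) (sq_nonneg _)
  have hg2 : ∑ pq ∈ Finset.univ ×ˢ Finset.univ, g pq ^ 2 ≤ D * ∑ k, y k ^ 2 := by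
    have : ∑ pq ∈ Finset.univ ×ˢ Finset.univ, g pq ^ 2 = ∑ j, (∑ i, W i j) * η j ^ 2 := by
      rw [Finset.sum_product, Finset.sum_comm]
      refine Finset.sum_congr rfl fun j _ => ?_
      rw [Finset.sum_mul]
      refine Finset.sum_congr rfl fun i _ => ?_
      simp only [hgdef]
      rw [mul_pow, Real.sq_sqrt (hW0 i j)]
    rw [this]
    have hysum : ∑ k, y k ^ 2 = ∑ j, η j ^ 2 := by
      rw [show (∑ k, y k ^ 2 : ℝ) = ∑ j, ∑ q, y ⟨j, q⟩ ^ 2 from Finset.sum_sigma _ _ _]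
      exact Finset.sum_congr rfl fun j _ =>
        (Real.sq_sqrt (Finset.sum_nonneg fun q _ => sq_nonneg _)).symm
    rw [hysum, Finset.mul_sum]
    exact Finset.sum_le_sum fun j _ =>
      mul_le_mul_of_nonneg_right (hWcol j) (sq_nonneg _)
  have step3 : ∑ pq ∈ Finset.univ ×ˢ Finset.univ, f pq * g pq
      ≤ D * (Real.sqrt (∑ k, x k ^ 2) * Real.sqrt (∑ k, y k ^ 2)) := by
    refine (le_abs_self _).trans ((abs_sum_mul_le_sqrt _ f g).trans ?_)
    have h1 : Real.sqrt (∑ pq ∈ Finset.univ ×ˢ Finset.univ, f pq ^ 2)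
        ≤ Real.sqrt (D * ∑ k, x k ^ 2) := Real.sqrt_le_sqrt hf2
    have h2 : Real.sqrt (∑ pq ∈ Finset.univ ×ˢ Finset.univ, g pq ^ 2)
        ≤ Real.sqrt (D * ∑ k, y k ^ 2) := Real.sqrt_le_sqrt hg2
    refine (mul_le_mul h1 h2 (Real.sqrt_nonneg _) (Real.sqrt_nonneg _)).trans_eq ?_
    rw [Real.sqrt_mul hDnn, Real.sqrt_mul hDnn]
    rw [show Real.sqrt D * Real.sqrt (∑ k, x k ^ 2) * (Real.sqrt D * Real.sqrt (∑ k, y k ^ 2))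
        = Real.sqrt D * Real.sqrt D * (Real.sqrt (∑ k, x k ^ 2) * Real.sqrt (∑ k, y k ^ 2)) by ring,
      Real.mul_self_sqrt hDnn]
  calc |∑ k, ∑ l, x k * E k l * y l| ≤ ∑ i, ∑ j, W i j * (ξ i * η j) := step1
    _ = ∑ pq ∈ Finset.univ ×ˢ Finset.univ, f pq * g pq := step2
    _ ≤ D * (Real.sqrt (∑ k, x k ^ 2) * Real.sqrt (∑ k, y k ^ 2)) := step3

/-- For a symmetric block matrix `E` with zero diagonal blocks and
`‖E_{ij}‖_F ≤ √(nᵢnⱼ)·√(h(Δ))` for `i ≠ j`, the spectral norm satisfies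
`‖E‖₂ ≤ √(h(Δ))·maxᵢ Σ_{j≠i} √(nᵢnⱼ) ≤ √(h(Δ))·(N + (C−2) n_max)/2`, and in the
balanced case `nᵢ = N/C` the bound becomes `‖E‖₂ ≤ N(1 − 1/C)√(h(Δ))`. -/
theorem specNorm_blockMatrix_bound
    {C : ℕ} (hC : 1 ≤ C) {n : Fin C → ℕ} (hn : ∀ i, 0 < n i)
    (E : Matrix ((i : Fin C) × Fin (n i)) ((i : Fin C) × Fin (n i)) ℝ)
    (hsymm : E.IsSymm)
    (hdiag : ∀ (i : Fin C) (x y : Fin (n i)), E ⟨i, x⟩ ⟨i, y⟩ = 0)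
    (hΔ : ℝ) (hΔpos : 0 ≤ hΔ)
    (hblock : ∀ i j, i ≠ j →
      Real.sqrt (frobSq (fun (x : Fin (n i)) (y : Fin (n j)) => E ⟨i, x⟩ ⟨j, y⟩))
        ≤ Real.sqrt ((n i : ℝ) * (n j : ℝ)) * Real.sqrt hΔ)
    (N nmax : ℝ) (hN : N = ∑ i, (n i : ℝ))
    (hmaxle : ∀ i, (n i : ℝ) ≤ nmax) (hmaxmem : ∃ i, (n i : ℝ) = nmax) :
    opNorm E ≤ Real.sqrt hΔ *
        (⨆ i : Fin C, ∑ j ∈ Finset.univ.erase i, Real.sqrt ((n i : ℝ) * (n j : ℝ)))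
    ∧ Real.sqrt hΔ *
        (⨆ i : Fin C, ∑ j ∈ Finset.univ.erase i, Real.sqrt ((n i : ℝ) * (n j : ℝ)))
        ≤ Real.sqrt hΔ * ((N + ((C : ℝ) - 2) * nmax) / 2)
    ∧ ((∀ i, (n i : ℝ) = N / C) →
        opNorm E ≤ N * (1 - 1 / (C : ℝ)) * Real.sqrt hΔ) := by
  classical
  haveI : Nonempty (Fin C) := ⟨⟨0, hC⟩⟩
  set row : Fin C → ℝ := fun i =>
    ∑ j ∈ Finset.univ.erase i, Real.sqrt ((n i : ℝ) * (n j : ℝ)) with hrowdef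
  set S : ℝ := ⨆ i : Fin C, row i with hSdef
  have hrownn : ∀ i, 0 ≤ row i :=
    fun i => Finset.sum_nonneg fun j _ => Real.sqrt_nonneg _
  have hSnn : 0 ≤ S := Real.iSup_nonneg hrownn
  have hSrow : ∀ i, row i ≤ S := fun i => le_ciSup (Finite.bddAbove_range _) i
  -- Part 1
  have bound1 : opNorm E ≤ Real.sqrt hΔ * S := by
    rw [opNorm]
    refine ContinuousLinearMap.opNorm_le_bound _ (by positivity) fun v => ?_
    set xv : ((i : Fin C) × Fin (n i)) → ℝ := fun k => ∑ l, E k l * v l with hxvdef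
    have hnorm : ∀ w : EuclideanSpace ℝ ((i : Fin C) × Fin (n i)),
        ‖w‖ = Real.sqrt (∑ k, (w k) ^ 2) := by
      intro w
      rw [EuclideanSpace.norm_eq]
      congr 1
      exact Finset.sum_congr rfl fun k _ => by rw [Real.norm_eq_abs, sq_abs]
    have happ : ∀ k, (LinearMap.toContinuousLinearMap (Matrix.toEuclideanLin E) v) k = xv k := by
      intro k
      simp [Matrix.toEuclideanLin_apply, Matrix.mulVec, dotProduct, hxvdef]
    have key := quad_bound E hdiag hΔ hΔpos hblock S hSnn hSrow xv (fun k => v k)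
    have e1 : ∑ k, ∑ l, xv k * E k l * v l = ∑ k, xv k ^ 2 := by
      refine Finset.sum_congr rfl fun k _ => ?_
      have h1 : (∑ l, xv k * E k l * v l : ℝ) = xv k * ∑ l, E k l * v l := by
        rw [Finset.mul_sum]; exact Finset.sum_congr rfl fun l _ => by ring
      have h2 : (∑ l, E k l * v l : ℝ) = xv k := rfl
      rw [h1, h2]; exact (sq (xv k)).symm
    rw [e1, abs_of_nonneg (Finset.sum_nonneg fun k _ => sq_nonneg _)] at key
    set a : ℝ := Real.sqrt (∑ k, xv k ^ 2) with hadef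
    set b : ℝ := Real.sqrt (∑ k, (v k) ^ 2) with hbdef
    have hEv : ‖LinearMap.toContinuousLinearMap (Matrix.toEuclideanLin E) v‖ = a := by
      rw [hnorm]
      congr 1
    have hvb : ‖v‖ = b := hnorm v
    rw [hEv, hvb]
    have ha2 : a ^ 2 = ∑ k, xv k ^ 2 :=
      Real.sq_sqrt (Finset.sum_nonneg fun k _ => sq_nonneg _)
    have key2 : a ^ 2 ≤ Real.sqrt hΔ * S * (a * b) := by rw [ha2]; exact key
    rcases eq_or_lt_of_le (Real.sqrt_nonneg (∑ k, xv k ^ 2)) with h0 | h0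
    · rw [← hadef] at h0
      rw [← h0]; positivity
    · rw [← hadef] at h0
      have : a * a ≤ Real.sqrt hΔ * S * b * a := by nlinarith [key2]
      exact le_of_mul_le_mul_right this h0
  refine ⟨bound1, ?_, ?_⟩
  -- Part 2
  · have amgm : ∀ a b : ℝ, 0 ≤ a → 0 ≤ b → Real.sqrt (a * b) ≤ (a + b) / 2 := by
      intro a b ha hb
      rw [show (a + b) / 2 = Real.sqrt (((a + b) / 2) ^ 2) from
        (Real.sqrt_sq (by positivity)).symm]
      exact Real.sqrt_le_sqrt (by nlinarith [sq_nonneg (a - b)])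
    have hnmaxN : nmax ≤ N := by
      obtain ⟨i0, hi0⟩ := hmaxmem
      rw [← hi0, hN]
      exact Finset.single_le_sum (f := fun j => ((n j : ℝ)))
        (fun j _ => Nat.cast_nonneg _) (Finset.mem_univ i0)
    have rowbd : ∀ i, row i ≤ (N + ((C : ℝ) - 2) * nmax) / 2 := by
      intro i
      by_cases hC2 : 2 ≤ C
      · have h1 : row i ≤ ∑ j ∈ Finset.univ.erase i, ((n i : ℝ) + (n j : ℝ)) / 2 :=
          Finset.sum_le_sum fun j _ => amgm _ _ (Nat.cast_nonneg _) (Nat.cast_nonneg _)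
        have h2 : ∑ j ∈ Finset.univ.erase i, ((n i : ℝ) + (n j : ℝ)) / 2
            = (N + ((C : ℝ) - 2) * (n i : ℝ)) / 2 := by
          rw [← Finset.sum_div]
          congr 1
          rw [Finset.sum_add_distrib, Finset.sum_const,
            Finset.card_erase_of_mem (Finset.mem_univ i), Finset.card_univ, Fintype.card_fin,
            Finset.sum_erase_eq_sub (Finset.mem_univ i), ← hN, nsmul_eq_mul,
            Nat.cast_sub hC]
          push_cast
          ring
        refine h1.trans (h2.trans_le ?_)
        have : ((C : ℝ) - 2) * (n i : ℝ) ≤ ((C : ℝ) - 2) * nmax := by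
          refine mul_le_mul_of_nonneg_left (hmaxle i) ?_
          have : (2 : ℝ) ≤ (C : ℝ) := by exact_mod_cast hC2
          linarith
        linarith
      · have hC1 : C = 1 := le_antisymm (by omega) hC
        subst hC1
        have : Finset.univ.erase i = (∅ : Finset (Fin 1)) := by
          apply Finset.eq_empty_of_forall_notMem
          intro j hj
          exact (Finset.ne_of_mem_erase hj) (Subsingleton.elim j i)
        have hrow0 : row i = 0 := by
          simp only [hrowdef]; rw [this, Finset.sum_empty]
        rw [hrow0]
        push_cast
        linarith
    exact mul_le_mul_of_nonneg_left (ciSup_le rowbd) (Real.sqrt_nonneg _)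
  -- Part 3
  · intro hbal
    have hCne : (C : ℝ) ≠ 0 := by positivity
    have hNC : (0 : ℝ) ≤ N / C := by
      rw [← hbal ⟨0, hC⟩]; exact Nat.cast_nonneg _
    have hrow : ∀ i, row i = ((C : ℝ) - 1) * (N / C) := by
      intro i
      rw [hrowdef]
      simp only
      rw [show (∑ j ∈ Finset.univ.erase i, Real.sqrt ((n i : ℝ) * (n j : ℝ)))
          = ∑ j ∈ Finset.univ.erase i, (N / C : ℝ) from
        Finset.sum_congr rfl fun j _ => by rw [hbal i, hbal j, Real.sqrt_mul_self hNC]]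
      rw [Finset.sum_const, Finset.card_erase_of_mem (Finset.mem_univ i), Finset.card_univ,
        Fintype.card_fin, nsmul_eq_mul, Nat.cast_sub hC]
      norm_num
    have hSval : S = ((C : ℝ) - 1) * (N / C) := by
      rw [hSdef]
      rw [show (fun i => row i) = fun _ : Fin C => ((C : ℝ) - 1) * (N / C) from funext hrow]
      exact ciSup_const
    refine bound1.trans_eq ?_
    rw [hSval]
    field_simp
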